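/- Fix γ > 0 and let P_n(x) = U_n(x) + e^{−γ/2}·U_{n−1}(x) with P_0 = 1. Then the polynomial P_n + P_{n−1} has at least n − 1 distinct real zeros in the open interval (−1, 1). -/
import Mathlib
set_option maxHeartbeats 1000000
open Real

noncomputable def chebUR : ℕ → ℝ → ℝ
  | 0, _ => 1
  | 1, x => 2 * x
  | (n + 2), x => 2 * x * chebUR (n + 1) x - chebUR n x

noncomputable def Pg (γ : ℝ) : ℕ → ℝ → ℝ
  | 0, _ => 1
  | (n + 1), x => chebUR (n + 1) x + Real.exp (-γ / 2) * chebUR n x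

lemma cheb_sin : ∀ (n : ℕ) (θ : ℝ), chebUR n (Real.cos θ) * Real.sin θ = Real.sin (((n:ℝ)+1) * θ)
  | 0, θ => by simp [chebUR]
  | 1, θ => by
      simp only [chebUR]
      rw [show ((1:ℕ):ℝ)+1 = 2 by norm_num, Real.sin_two_mul]; ring
  | (n+2), θ => by
      have h1 := cheb_sin (n+1) θ
      have h2 := cheb_sin n θ
      simp only [chebUR]
      push_cast at h1 h2 ⊢
      have e1 : Real.sin (((n:ℝ)+2+1)*θ) = Real.sin (((n:ℝ)+1+1)*θ)*Real.cos θ + Real.cos (((n:ℝ)+1+1)*θ)*Real.sin θ := by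
        rw [show ((n:ℝ)+2+1)*θ = ((n:ℝ)+1+1)*θ + θ by ring, Real.sin_add]
      have e2 : Real.sin (((n:ℝ)+1)*θ) = Real.sin (((n:ℝ)+1+1)*θ)*Real.cos θ - Real.cos (((n:ℝ)+1+1)*θ)*Real.sin θ := by
        rw [show ((n:ℝ)+1)*θ = ((n:ℝ)+1+1)*θ - θ by ring, Real.sin_sub]
      linear_combination 2*Real.cos θ * h1 - h2 - e1 - e2

lemma sin_halfodd (k : ℕ) : Real.sin ((2*(k:ℝ)+1)*π/2) = (-1)^k := by
  induction k with
  | zero => norm_num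
  | succ k ih =>
      push_cast
      rw [show (2*((k:ℝ)+1)+1)*π/2 = (2*(k:ℝ)+1)*π/2 + π by ring, Real.sin_add_pi, ih]
      ring

lemma cos_halfodd (k : ℕ) : Real.cos ((2*(k:ℝ)+1)*π/2) = 0 := by
  induction k with
  | zero => norm_num
  | succ k ih =>
      push_cast
      rw [show (2*((k:ℝ)+1)+1)*π/2 = (2*(k:ℝ)+1)*π/2 + π by ring, Real.cos_add_pi, ih]
      ring

lemma tpos (m k : ℕ) : 0 < (2*(k:ℝ)+1)*π/(2*(m:ℝ)+5) := by
  apply div_pos (by positivity) (by positivity)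

lemma tltpi (m k : ℕ) (hk : k ≤ m+1) : (2*(k:ℝ)+1)*π/(2*(m:ℝ)+5) < π := by
  rw [div_lt_iff₀ (by positivity)]
  have : (k:ℝ) ≤ (m:ℝ) + 1 := by exact_mod_cast hk
  nlinarith [Real.pi_pos]

lemma signF (γ : ℝ) (hγ : 0 < γ) (m k : ℕ) (hk : k ≤ m+1) :
    0 < (-1:ℝ)^k * (Pg γ (m+2) (Real.cos ((2*(k:ℝ)+1)*π/(2*(m:ℝ)+5)))
      + Pg γ (m+1) (Real.cos ((2*(k:ℝ)+1)*π/(2*(m:ℝ)+5)))) := by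
  set t : ℝ := (2*(k:ℝ)+1)*π/(2*(m:ℝ)+5) with ht
  set c : ℝ := Real.exp (-γ/2) with hcdef
  have hc0 : 0 < c := Real.exp_pos _
  have hc1 : c < 1 := by
    rw [hcdef, Real.exp_lt_one_iff]
    linarith
  have ht0 : 0 < t := tpos m k
  have htpi : t < π := tltpi m k hk
  have hden : (2*(m:ℝ)+5) ≠ 0 := by positivity
  set M : ℝ := (2*(k:ℝ)+1)*π/2 with hM
  have i1 : ((m:ℝ)+2+1)*t = M + t/2 := by rw [ht, hM]; field_simp; ring
  have i2 : ((m:ℝ)+1+1)*t = M - t/2 := by rw [ht, hM]; field_simp; ring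
  have i3 : ((m:ℝ)+1)*t = M - 3*t/2 := by rw [ht, hM]; field_simp; ring
  have hs : Real.sin M = (-1)^k := sin_halfodd k
  have hcM : Real.cos M = 0 := cos_halfodd k
  have A1 : Real.sin (((m:ℝ)+2+1)*t) = (-1)^k * Real.cos (t/2) := by
    rw [i1, Real.sin_add, hs, hcM]; ring
  have A2 : Real.sin (((m:ℝ)+1+1)*t) = (-1)^k * Real.cos (t/2) := by
    rw [i2, Real.sin_sub, hs, hcM]; ring
  have A3 : Real.sin (((m:ℝ)+1)*t) = (-1)^k * Real.cos (3*t/2) := by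
    rw [i3, Real.sin_sub, hs, hcM]; ring
  have hcc : Real.cos (3*t/2) = Real.cos t * Real.cos (t/2) - Real.sin t * Real.sin (t/2) := by
    rw [show 3*t/2 = t + t/2 by ring, Real.cos_add]
  have hh : Real.cos (t/2) = Real.cos t * Real.cos (t/2) + Real.sin t * Real.sin (t/2) := by
    have h := Real.cos_sub t (t/2)
    rw [show t - t/2 = t/2 by ring] at h
    linarith
  have B1 := cheb_sin (m+2) t
  have B2 := cheb_sin (m+1) t
  have B3 := cheb_sin m t
  push_cast at B1 B2 B3
  have Fexp : Pg γ (m+2) (Real.cos t) + Pg γ (m+1) (Real.cos t)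
      = chebUR (m+2) (Real.cos t) + chebUR (m+1) (Real.cos t)
        + c * (chebUR (m+1) (Real.cos t) + chebUR m (Real.cos t)) := by
    simp only [Pg, hcdef]; ring
  have key : (Pg γ (m+2) (Real.cos t) + Pg γ (m+1) (Real.cos t)) * Real.sin t
      = (-1)^k * (Real.cos (t/2) * (2 + 2*c*Real.cos t)) := by
    rw [Fexp]
    linear_combination B1 + (1+c)*B2 + c*B3 + A1 + (1+c)*A2 + c*A3
      + c*(-1:ℝ)^k*hcc + c*(-1:ℝ)^k*hh
  have hsin : 0 < Real.sin t := Real.sin_pos_of_pos_of_lt_pi ht0 htpi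
  have hcos2 : 0 < Real.cos (t/2) := by
    apply Real.cos_pos_of_mem_Ioo
    constructor <;> [linarith [Real.pi_pos]; linarith]
  have hbr : 0 < 2 + 2*c*Real.cos t := by
    nlinarith [Real.neg_one_le_cos t, Real.cos_le_one t]
  have hprod : 0 < ((-1:ℝ)^k * (Pg γ (m+2) (Real.cos t) + Pg γ (m+1) (Real.cos t))) * Real.sin t := by
    have h1 : ((-1:ℝ)^k * (Pg γ (m+2) (Real.cos t) + Pg γ (m+1) (Real.cos t))) * Real.sin t
        = ((-1:ℝ)^k)^2 * (Real.cos (t/2) * (2 + 2*c*Real.cos t)) := by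
      rw [show ((-1:ℝ)^k * (Pg γ (m+2) (Real.cos t) + Pg γ (m+1) (Real.cos t))) * Real.sin t
          = (-1:ℝ)^k * ((Pg γ (m+2) (Real.cos t) + Pg γ (m+1) (Real.cos t)) * Real.sin t) by ring,
        key]
      ring
    rw [h1, show ((-1:ℝ)^k)^2 = 1 by rw [← pow_mul, mul_comm, pow_mul]; norm_num]
    nlinarith
  nlinarith [hprod, hsin]

lemma cheb_cont : ∀ n : ℕ, Continuous (chebUR n)
  | 0 => by
      have : chebUR 0 = fun _ => (1:ℝ) := rfl
      rw [this]; exact continuous_const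
  | 1 => by
      have : chebUR 1 = fun x => 2*x := rfl
      rw [this]; fun_prop
  | (n+2) => by
      have h1 := cheb_cont (n+1)
      have h2 := cheb_cont n
      have : chebUR (n+2) = fun x => 2 * x * chebUR (n+1) x - chebUR n x := rfl
      rw [this]; fun_prop


theorem stmt6 (γ : ℝ) (hγ : 0 < γ) (n : ℕ) (hn : 1 ≤ n) :
    ∃ S : Finset ℝ, n - 1 ≤ S.card ∧
      ∀ x ∈ S, x ∈ Set.Ioo (-1 : ℝ) 1 ∧ Pg γ n x + Pg γ (n - 1) x = 0 := by
  obtain rfl | hn2 : n = 1 ∨ 2 ≤ n := by omega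
  · exact ⟨∅, by simp⟩
  obtain ⟨m, rfl⟩ : ∃ m, n = m + 2 := ⟨n - 2, by omega⟩
  set F : ℝ → ℝ := fun x => Pg γ (m+2) x + Pg γ (m+1) x with hF
  have hFcont : Continuous F := by
    have e : Pg γ (m+2) = fun x => chebUR (m+2) x + Real.exp (-γ/2) * chebUR (m+1) x := rfl
    have e' : Pg γ (m+1) = fun x => chebUR (m+1) x + Real.exp (-γ/2) * chebUR m x := rfl
    rw [hF, e, e']
    have := cheb_cont (m+2); have := cheb_cont (m+1); have := cheb_cont m
    fun_prop
  set t : ℕ → ℝ := fun k => (2*(k:ℝ)+1)*π/(2*(m:ℝ)+5) with htdef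
  set X : ℕ → ℝ := fun k => Real.cos (t k) with hXdef
  have htmem : ∀ k, k ≤ m+1 → t k ∈ Set.Icc 0 π := fun k hk =>
    ⟨le_of_lt (tpos m k), le_of_lt (tltpi m k hk)⟩
  have htmono : ∀ i j : ℕ, i < j → t i < t j := by
    intro i j hij
    have hij' : (i:ℝ) < (j:ℝ) := by exact_mod_cast hij
    simp only [htdef]
    gcongr
  have hXlt : ∀ i j : ℕ, i < j → j ≤ m+1 → X j < X i := by
    intro i j hij hj
    exact Real.strictAntiOn_cos (htmem i (by omega)) (htmem j hj) (htmono i j hij)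
  have key : ∀ k : ℕ, ∃ y, k ≤ m → y ∈ Set.Ioo (X (k+1)) (X k) ∧ F y = 0 := by
    intro k
    by_cases hk : k ≤ m
    · have s1 := signF γ hγ m k (by omega)
      have s2 := signF γ hγ m (k+1) (by omega)
      have hxlt : X (k+1) < X k := hXlt k (k+1) (by omega) (by omega)
      rcases Nat.even_or_odd k with he | ho
      · have e1 : ((-1:ℝ))^k = 1 := he.neg_one_pow
        have e2 : ((-1:ℝ))^(k+1) = -1 := (he.add_one).neg_one_pow
        rw [e1] at s1; rw [e2] at s2
        have h1 : 0 < F (X k) := by simpa [hF, hXdef, htdef] using s1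
        have h2 : F (X (k+1)) < 0 := by
          simp only [hF, hXdef, htdef] at s2 ⊢; push_cast at s2 ⊢; linarith
        have hmem : (0:ℝ) ∈ Set.Ioo (F (X (k+1))) (F (X k)) := ⟨h2, h1⟩
        obtain ⟨y, hy, hFy⟩ := intermediate_value_Ioo hxlt.le hFcont.continuousOn hmem
        exact ⟨y, fun _ => ⟨hy, hFy⟩⟩
      · have e1 : ((-1:ℝ))^k = -1 := ho.neg_one_pow
        have e2 : ((-1:ℝ))^(k+1) = 1 := (Odd.add_one ho).neg_one_pow
        rw [e1] at s1; rw [e2] at s2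
        have h1 : F (X k) < 0 := by
          simp only [hF, hXdef, htdef] at s1 ⊢; push_cast at s1 ⊢; linarith
        have h2 : 0 < F (X (k+1)) := by simpa [hF, hXdef, htdef] using s2
        have hmem : (0:ℝ) ∈ Set.Ioo (F (X k)) (F (X (k+1))) := ⟨h1, h2⟩
        obtain ⟨y, hy, hFy⟩ := intermediate_value_Ioo' hxlt.le hFcont.continuousOn hmem
        exact ⟨y, fun _ => ⟨hy, hFy⟩⟩
    · exact ⟨0, fun h => absurd h hk⟩
  choose Y hY using key
  refine ⟨(Finset.range (m+1)).image Y, ?_, ?_⟩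
  · have hlt : ∀ a b : ℕ, a < b → b ≤ m → Y b < Y a := by
      intro a b h hb
      have h1 := (hY a (by omega)).1
      have h2 := (hY b hb).1
      have hx : X b ≤ X (a+1) := by
        rcases eq_or_lt_of_le (show a+1 ≤ b from h) with he | hlt'
        · rw [he]
        · exact (hXlt (a+1) b hlt' (by omega)).le
      have := h1.1; have := h2.2
      linarith
    have hinj : Set.InjOn Y (Finset.range (m+1) : Set ℕ) := by
      intro a ha b hb hab
      simp only [Finset.coe_range, Set.mem_Iio] at ha hb
      rcases lt_trichotomy a b with h | h | h
      · exfalso; have := hlt a b h (by omega); linarith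
      · exact h
      · exfalso; have := hlt b a h (by omega); linarith
    rw [Finset.card_image_of_injOn hinj, Finset.card_range]
    omega
  · intro x hx
    simp only [Finset.mem_image, Finset.mem_range] at hx
    obtain ⟨k, hk, rfl⟩ := hx
    obtain ⟨⟨hy1, hy2⟩, hFy⟩ := hY k (by omega)
    have hb1 : -1 < X (k+1) := by
      have : Real.cos π < Real.cos (t (k+1)) := by
        apply Real.strictAntiOn_cos (htmem (k+1) (by omega)) ?_ (tltpi m (k+1) (by omega))
        exact ⟨le_of_lt Real.pi_pos, le_refl _⟩
      rw [Real.cos_pi] at this; exact this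
    have hb2 : X k < 1 := by
      have : Real.cos (t k) < Real.cos 0 := by
        apply Real.strictAntiOn_cos ?_ (htmem k (by omega)) (tpos m k)
        exact ⟨le_refl _, le_of_lt Real.pi_pos⟩
      rw [Real.cos_zero] at this; exact this
    refine ⟨⟨by linarith, by linarith⟩, ?_⟩
    simpa [hF] using hFy
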